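/- arXiv:2508.00263 — 3 statements merged into one kernel-verified Lean document; each statement's English description precedes it below -/
import Mathlib

section
/- Let v > 1 and C₁ > 0. Let f : ℝ → ℝ be a nonnegative continuous probability density (so ∫_ℝ f = 1) satisfying f(y)·y^{v+1} → C₁·v as y → ∞, and let F(y) = ∫_{−∞}^{y} f. For a nondecreasing function F : ℝ → ℝ, define the quantile function Q(τ) = inf { y : τ ≤ F(y) }. Then (∫_{Q(τ)}^{∞} y·f(y) dy) / ((1 − τ)·Q(τ)) → v/(v − 1) as τ → 1⁻. -/
open Filter Topology MeasureTheory

open Set in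
private lemma tail_integral_asymp (p c : ℝ) (hp : 0 < p)
    (g : ℝ → ℝ) (hg : Continuous g)
    (hgt : Tendsto (fun y => g y * y ^ (p + 1)) atTop (𝓝 c)) :
    Tendsto (fun x => x ^ p * ∫ y in Ioi x, g y) atTop (𝓝 (c / p)) := by
  rw [Metric.tendsto_nhds]
  intro ε hε
  have hδ : 0 < p * ε / 2 := by positivity
  set δ := p * ε / 2 with hδdef
  obtain ⟨M, hM⟩ := eventually_atTop.1
    (hgt.eventually (Metric.closedBall_mem_nhds c hδ))
  filter_upwards [eventually_ge_atTop (max M 1)] with x hx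
  have hx1 : (1:ℝ) ≤ x := le_trans (le_max_right _ _) hx
  have hxM : M ≤ x := le_trans (le_max_left _ _) hx
  have hx0 : (0:ℝ) < x := lt_of_lt_of_le one_pos hx1
  have hbd : ∀ y ∈ Ioi x, |g y * y ^ (p + 1) - c| ≤ δ := fun y hy => by
    have := hM y (le_of_lt (lt_of_le_of_lt hxM hy))
    rwa [Real.dist_eq] at this
  have hy0 : ∀ y ∈ Ioi x, (0:ℝ) < y := fun y hy => lt_trans hx0 hy
  have hmul : ∀ y : ℝ, 0 < y → y ^ (p + 1) * y ^ (-(p + 1)) = 1 := fun y hy => by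
    rw [← Real.rpow_add hy, add_neg_cancel, Real.rpow_zero]
  have hrep : ∀ y ∈ Ioi x, g y = (g y * y ^ (p + 1)) * y ^ (-(p + 1)) := fun y hy => by
    rw [mul_assoc, hmul y (hy0 y hy), mul_one]
  have hintpow : IntegrableOn (fun y : ℝ => y ^ (-(p + 1))) (Ioi x) :=
    integrableOn_Ioi_rpow_of_lt (by linarith) hx0
  have hpownn : ∀ y ∈ Ioi x, (0:ℝ) ≤ y ^ (-(p + 1)) := fun y hy =>
    Real.rpow_nonneg (le_of_lt (hy0 y hy)) _
  have hintg : IntegrableOn g (Ioi x) := by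
    refine Integrable.mono' (hintpow.const_mul (|c| + δ))
      hg.aestronglyMeasurable.restrict ?_
    refine (ae_restrict_iff' measurableSet_Ioi).2 (ae_of_all _ fun y hy => ?_)
    rw [Real.norm_eq_abs, hrep y hy, abs_mul,
      abs_of_nonneg (hpownn y hy)]
    have h1 : |g y * y ^ (p + 1)| ≤ |c| + δ := by
      have := hbd y hy
      have := abs_sub_abs_le_abs_sub (g y * y ^ (p + 1)) c
      linarith
    exact mul_le_mul_of_nonneg_right h1 (hpownn y hy)
  have hIpow : ∫ y in Ioi x, y ^ (-(p + 1)) = x ^ (-p) / p := by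
    rw [integral_Ioi_rpow_of_lt (by linarith) hx0, show -(p + 1) + 1 = -p by ring,
      neg_div_neg_eq]
  have hub : ∫ y in Ioi x, g y ≤ (c + δ) / p * x ^ (-p) := by
    have h1 : ∫ y in Ioi x, g y ≤ ∫ y in Ioi x, (c + δ) * y ^ (-(p + 1)) := by
      refine setIntegral_mono_on hintg (hintpow.const_mul _) measurableSet_Ioi
        fun y hy => ?_
      rw [hrep y hy]
      exact mul_le_mul_of_nonneg_right (by have := hbd y hy; cases abs_le.1 this; linarith)
        (hpownn y hy)
    rw [integral_const_mul, hIpow] at h1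
    calc ∫ y in Ioi x, g y ≤ (c + δ) * (x ^ (-p) / p) := h1
      _ = (c + δ) / p * x ^ (-p) := by ring
  have hlb : (c - δ) / p * x ^ (-p) ≤ ∫ y in Ioi x, g y := by
    have h1 : ∫ y in Ioi x, (c - δ) * y ^ (-(p + 1)) ≤ ∫ y in Ioi x, g y := by
      refine setIntegral_mono_on (hintpow.const_mul _) hintg measurableSet_Ioi
        fun y hy => ?_
      rw [hrep y hy]
      exact mul_le_mul_of_nonneg_right (by have := hbd y hy; cases abs_le.1 this; linarith)
        (hpownn y hy)
    rw [integral_const_mul, hIpow] at h1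
    calc (c - δ) / p * x ^ (-p) = (c - δ) * (x ^ (-p) / p) := by ring
      _ ≤ ∫ y in Ioi x, g y := h1
  have hxpow : x ^ p * x ^ (-p) = 1 := by rw [← Real.rpow_add hx0, add_neg_cancel, Real.rpow_zero]
  have hxpnn : (0:ℝ) ≤ x ^ p := Real.rpow_nonneg (le_of_lt hx0) _
  have hub2 : x ^ p * ∫ y in Ioi x, g y ≤ (c + δ) / p := by
    calc x ^ p * ∫ y in Ioi x, g y ≤ x ^ p * ((c + δ) / p * x ^ (-p)) :=
          mul_le_mul_of_nonneg_left hub hxpnn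
      _ = (c + δ) / p * (x ^ p * x ^ (-p)) := by ring
      _ = (c + δ) / p := by rw [hxpow, mul_one]
  have hlb2 : (c - δ) / p ≤ x ^ p * ∫ y in Ioi x, g y := by
    calc (c - δ) / p = (c - δ) / p * (x ^ p * x ^ (-p)) := by rw [hxpow, mul_one]
      _ = x ^ p * ((c - δ) / p * x ^ (-p)) := by ring
      _ ≤ x ^ p * ∫ y in Ioi x, g y := mul_le_mul_of_nonneg_left hlb hxpnn
  rw [Real.dist_eq]
  have hδp : δ / p = ε / 2 := by rw [hδdef]; field_simp
  have h1 : (c + δ) / p = c / p + ε / 2 := by rw [add_div, hδp]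
  have h2 : (c - δ) / p = c / p - ε / 2 := by rw [sub_div, hδp]
  rw [abs_lt]
  constructor <;> [linarith [hlb2, h2.symm ▸ hlb2]; linarith [hub2, h1 ▸ hub2]]

/-- Convergent branch of Proposition 2: for a density with Pareto-type upper tail
with exponent `v > 1`, the ratio of the expected longrise to the threshold quantile
converges to `v/(v-1)` as `τ → 1⁻`. -/
theorem longrise_over_quantile_tendsto
    (v C₁ : ℝ) (hv : 1 < v) (hC₁ : 0 < C₁)
    (f : ℝ → ℝ) (hf_cont : Continuous f) (hf_nonneg : ∀ y, 0 ≤ f y)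
    (hf_prob : ∫ y, f y = 1)
    (hf_tail : Tendsto (fun y : ℝ => f y * y ^ (v + 1)) atTop (𝓝 (C₁ * v)))
    (F : ℝ → ℝ) (hF : ∀ y, F y = ∫ t in Set.Iic y, f t)
    (Q : ℝ → ℝ) (hQ : ∀ τ, Q τ = sInf {y : ℝ | τ ≤ F y}) :
    Tendsto (fun τ : ℝ => (∫ y in Set.Ioi (Q τ), y * f y) / ((1 - τ) * Q τ))
      (nhdsWithin 1 (Set.Iio 1)) (𝓝 (v / (v - 1))) := by
  have hv0 : (0:ℝ) < v := lt_trans one_pos hv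
  have hv1 : (0:ℝ) < v - 1 := by linarith
  have hf_int : Integrable f := by
    by_contra h
    rw [integral_undef h] at hf_prob
    exact zero_ne_one hf_prob
  have hIic : ∀ y : ℝ, IntegrableOn f (Set.Iic y) := fun y => hf_int.integrableOn
  have hIoi : ∀ y : ℝ, IntegrableOn f (Set.Ioi y) := fun y => hf_int.integrableOn
  have hA : Tendsto (fun x => x ^ v * ∫ y in Set.Ioi x, f y) atTop (𝓝 C₁) := by
    have h := tail_integral_asymp v (C₁ * v) hv0 f hf_cont hf_tail
    rwa [mul_div_assoc, div_self (ne_of_gt hv0), mul_one] at h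
  have hB : Tendsto (fun x => x ^ (v - 1) * ∫ y in Set.Ioi x, y * f y) atTop
      (𝓝 (C₁ * v / (v - 1))) := by
    have hcong : (fun y : ℝ => f y * y ^ (v + 1)) =ᶠ[atTop]
        (fun y : ℝ => (y * f y) * y ^ ((v - 1) + 1)) := by
      filter_upwards [eventually_gt_atTop (0:ℝ)] with y hy
      rw [show (v - 1) + 1 = v by ring, show v + 1 = v + 1 from rfl,
        Real.rpow_add_one (ne_of_gt hy)]
      ring
    exact tail_integral_asymp (v - 1) (C₁ * v) hv1 (fun y => y * f y)
      (continuous_id.mul hf_cont) (hf_tail.congr' hcong)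
  have hH : Tendsto (fun x => (∫ y in Set.Ioi x, y * f y) / (x * ∫ y in Set.Ioi x, f y))
      atTop (𝓝 (v / (v - 1))) := by
    have hdiv := hB.div hA (ne_of_gt hC₁)
    have hlim : C₁ * v / (v - 1) / C₁ = v / (v - 1) := by
      field_simp
    rw [hlim] at hdiv
    refine hdiv.congr' ?_
    filter_upwards [eventually_gt_atTop (0:ℝ)] with x hx
    have hxne : x ^ (v - 1) ≠ 0 := ne_of_gt (Real.rpow_pos_of_pos hx _)
    have hxv : x ^ v = x ^ (v - 1) * x := by
      rw [← Real.rpow_add_one (ne_of_gt hx)]; ring_nf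
    simp only [Pi.div_apply]
    rw [hxv]
    rw [mul_assoc, mul_div_mul_left _ _ hxne]
  have hD_pos : ∀ x : ℝ, 0 < ∫ y in Set.Ioi x, f y := by
    intro x
    obtain ⟨x0, hx01, hx02⟩ := ((hA.eventually (eventually_gt_nhds (half_lt_self hC₁))).and
      (eventually_ge_atTop (max x 1))).exists
    have hx0pos : (0:ℝ) < x0 := lt_of_lt_of_le one_pos (le_trans (le_max_right _ _) hx02)
    have hx0ge : x ≤ x0 := le_trans (le_max_left _ _) hx02
    have hpos0 : 0 < ∫ y in Set.Ioi x0, f y := by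
      by_contra h
      push_neg at h
      have h2 : x0 ^ v * ∫ y in Set.Ioi x0, f y ≤ 0 :=
        mul_nonpos_of_nonneg_of_nonpos (Real.rpow_nonneg hx0pos.le v) h
      linarith
    refine lt_of_lt_of_le hpos0 ?_
    exact setIntegral_mono_set (hIoi x) (ae_of_all _ hf_nonneg)
      ((Set.Ioi_subset_Ioi hx0ge).eventuallyLE)
  have hsum : ∀ x : ℝ, F x + ∫ y in Set.Ioi x, f y = 1 := fun x => by
    rw [hF, intervalIntegral.integral_Iic_add_Ioi (hIic x) (hIoi x), hf_prob]
  have hFlt1 : ∀ x, F x < 1 := fun x => by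
    have h1 := hD_pos x; have h2 := hsum x; linarith
  have hFmono : Monotone F := fun a b hab => by
    rw [hF a, hF b]
    exact setIntegral_mono_set (hIic b) (ae_of_all _ hf_nonneg)
      ((Set.Iic_subset_Iic.2 hab).eventuallyLE)
  have hFcont : Continuous F := by
    refine Continuous.congr (f := fun y => F 0 + ∫ t in (0:ℝ)..y, f t)
      (continuous_const.add (hf_int.continuous_primitive 0)) fun y => ?_
    have h1 := intervalIntegral.integral_Iic_sub_Iic (hIic 0) (hIic y)
    show F 0 + ∫ t in (0:ℝ)..y, f t = F y
    rw [hF y, hF 0]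
    linarith
  have hFtop : ∀ τ < (1:ℝ), ∃ y, τ ≤ F y := by
    intro τ hτ
    have h1 : Tendsto (fun x : ℝ => x ^ (-v)) atTop (𝓝 0) := tendsto_rpow_neg_atTop hv0
    have hzero : Tendsto (fun x => ∫ y in Set.Ioi x, f y) atTop (𝓝 0) := by
      have h2 := hA.mul h1
      rw [mul_zero] at h2
      refine h2.congr' ?_
      filter_upwards [eventually_gt_atTop (0:ℝ)] with x hx
      have h3 : x ^ v * x ^ (-v) = 1 := by
        rw [← Real.rpow_add hx, add_neg_cancel, Real.rpow_zero]
      calc x ^ v * (∫ y in Set.Ioi x, f y) * x ^ (-v)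
          = (x ^ v * x ^ (-v)) * ∫ y in Set.Ioi x, f y := by ring
        _ = ∫ y in Set.Ioi x, f y := by rw [h3, one_mul]
    have hFt : Tendsto F atTop (𝓝 1) := by
      have h4 := (tendsto_const_nhds (x := (1:ℝ)) (f := atTop)).sub hzero
      rw [sub_zero] at h4
      refine h4.congr fun x => ?_
      have := hsum x; linarith
    obtain ⟨y, hy⟩ := (hFt.eventually (eventually_gt_nhds hτ)).exists
    exact ⟨y, hy.le⟩
  have hFbot : ∀ τ > (0:ℝ), ∃ y, F y < τ := by
    intro τ hτ
    have h1 : Tendsto (fun a : ℝ => ∫ t in a..(0:ℝ), f t) atBot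
        (𝓝 (∫ t in Set.Iic (0:ℝ), f t)) :=
      intervalIntegral_tendsto_integral_Iic 0 (hIic 0) tendsto_id
    have h2 : Tendsto F atBot (𝓝 0) := by
      have h3 := (tendsto_const_nhds (x := ∫ t in Set.Iic (0:ℝ), f t) (f := atBot)).sub h1
      rw [sub_self] at h3
      refine h3.congr fun a => ?_
      have h4 := intervalIntegral.integral_Iic_sub_Iic (hIic a) (hIic 0)
      rw [hF a]
      linarith
    exact (h2.eventually (eventually_lt_nhds hτ)).exists
  have hQF : ∀ τ ∈ Set.Ioo (0:ℝ) 1, F (Q τ) = τ := by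
    intro τ hτ
    obtain ⟨a, ha⟩ := hFtop τ hτ.2
    obtain ⟨b, hb⟩ := hFbot τ hτ.1
    have hne : Set.Nonempty {y : ℝ | τ ≤ F y} := ⟨a, ha⟩
    have hbdd : BddBelow {y : ℝ | τ ≤ F y} := ⟨b, fun z hz => by
      by_contra h
      push_neg at h
      have := hFmono h.le
      have hz' : τ ≤ F z := hz
      linarith⟩
    have hclosed : IsClosed {y : ℝ | τ ≤ F y} := isClosed_le continuous_const hFcont
    have hmem : Q τ ∈ {y : ℝ | τ ≤ F y} := hQ τ ▸ hclosed.csInf_mem hne hbdd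
    have hle : F (Q τ) ≤ τ := by
      have htend : Tendsto F (nhdsWithin (Q τ) (Set.Iio (Q τ))) (𝓝 (F (Q τ))) :=
        (hFcont.tendsto _).mono_left nhdsWithin_le_nhds
      refine le_of_tendsto htend ?_
      refine eventually_nhdsWithin_of_forall fun y hy => ?_
      by_contra h
      push_neg at h
      have h5 : Q τ ≤ y := hQ τ ▸ csInf_le hbdd h.le
      exact absurd (Set.mem_Iio.1 hy) (not_lt.2 h5)
    exact le_antisymm hle hmem
  have hQtop : Tendsto Q (nhdsWithin 1 (Set.Iio 1)) atTop := by
    rw [tendsto_atTop]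
    intro R
    have hmem : Set.Ioo (F R) 1 ∈ nhdsWithin (1:ℝ) (Set.Iio 1) :=
      Ioo_mem_nhdsLT_of_mem ⟨hFlt1 R, le_refl 1⟩
    filter_upwards [hmem] with τ hτ
    obtain ⟨a, ha⟩ := hFtop τ hτ.2
    rw [hQ]
    refine le_csInf ⟨a, ha⟩ fun z hz => ?_
    by_contra h
    push_neg at h
    have h6 : F z ≤ F R := hFmono h.le
    have h7 : τ ≤ F z := hz
    linarith [hτ.1]
  refine (hH.comp hQtop).congr' ?_
  have hmem : Set.Ioo (0:ℝ) 1 ∈ nhdsWithin (1:ℝ) (Set.Iio 1) :=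
    Ioo_mem_nhdsLT_of_mem ⟨one_pos, le_refl 1⟩
  filter_upwards [hmem] with τ hτ
  have hFQ := hQF τ hτ
  have h1τ : 1 - τ = ∫ y in Set.Ioi (Q τ), f y := by
    have := hsum (Q τ); rw [hFQ] at this; linarith
  simp only [Function.comp]
  rw [h1τ]
  ring
end

section
/- Let F : ℝ → ℝ be nondecreasing and continuous, let v > 0 and C₁ > 0, and suppose (1 − F(y))·y^{v} → C₁ as y → ∞. For a nondecreasing function F : ℝ → ℝ, define the quantile function Q(τ) = inf { y : τ ≤ F(y) }. Then (1 − τ)·Q(τ)^{v} → C₁ as τ → 1⁻; equivalently, Q(τ) is asymptotically equivalent to (C₁/(1 − τ))^{1/v} as τ → 1⁻. -/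
open Filter Topology

/-- Quantile-tail asymptotics: a regularly varying survival function
`1 − F(y) ∼ C₁ y^{−v}` implies `(1 − τ)·Q(τ)^v → C₁` as `τ → 1⁻`. -/
theorem quantile_tail_asymptotics
    (F : ℝ → ℝ) (hF_mono : Monotone F) (hF_cont : Continuous F)
    (v C₁ : ℝ) (hv : 0 < v) (hC₁ : 0 < C₁)
    (h_tail : Tendsto (fun y : ℝ => (1 - F y) * y ^ v) atTop (𝓝 C₁))
    (Q : ℝ → ℝ) (hQ : ∀ τ, Q τ = sInf {y : ℝ | τ ≤ F y}) :
    Tendsto (fun τ : ℝ => (1 - τ) * (Q τ) ^ v) (nhdsWithin 1 (Set.Iio 1)) (𝓝 C₁) := by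
  -- F y < 1 for all y
  have hev : ∀ᶠ y in atTop, 0 < (1 - F y) * y ^ v :=
    h_tail.eventually (eventually_gt_nhds hC₁)
  have hFlt : ∀ y, F y < 1 := by
    intro y
    obtain ⟨z, hz1, hz2⟩ := ((hev.and (eventually_gt_atTop 0)).and
      (eventually_ge_atTop y)).exists
    have hzpow : 0 < (z : ℝ) ^ v := Real.rpow_pos_of_pos hz1.2 v
    have h1 : F z < 1 := by nlinarith [hz1.1]
    exact lt_of_le_of_lt (hF_mono hz2) h1
  -- F → 1 at ∞
  have hinv : Tendsto (fun y : ℝ => ((y : ℝ) ^ v)⁻¹) atTop (𝓝 0) :=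
    (tendsto_rpow_atTop hv).inv_tendsto_atTop
  have hsub : Tendsto (fun y : ℝ => 1 - F y) atTop (𝓝 0) := by
    have := h_tail.mul hinv
    rw [mul_zero] at this
    refine this.congr' ?_
    filter_upwards [eventually_gt_atTop (0 : ℝ)] with y hy
    have : (y : ℝ) ^ v ≠ 0 := (Real.rpow_pos_of_pos hy v).ne'
    field_simp
  have hF1 : Tendsto F atTop (𝓝 1) := by
    have h := (tendsto_const_nhds : Tendsto (fun _ : ℝ => (1:ℝ)) atTop (𝓝 1)).sub hsub
    simpa using h
  -- nonemptiness of the sets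
  have hne : ∀ τ : ℝ, τ < 1 → {y : ℝ | τ ≤ F y}.Nonempty := by
    intro τ hτ
    obtain ⟨y, hy⟩ := (hF1.eventually (eventually_ge_nhds hτ)).exists
    exact ⟨y, hy⟩
  have hbdd : ∀ b τ : ℝ, F b < τ → b ∈ lowerBounds {y : ℝ | τ ≤ F y} := by
    intro b τ hbτ y hy
    by_contra h
    push_neg at h
    exact absurd (le_trans hy (hF_mono h.le)) (not_le.mpr hbτ)
  -- F (Q τ) = τ
  have hQF : ∀ b τ : ℝ, F b < τ → τ < 1 → F (Q τ) = τ := by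
    intro b τ hbτ hτ1
    have hS := hne τ hτ1
    have hbd : BddBelow {y : ℝ | τ ≤ F y} := ⟨b, hbdd b τ hbτ⟩
    have hclosed : IsClosed {y : ℝ | τ ≤ F y} :=
      isClosed_le continuous_const hF_cont
    have hmem : τ ≤ F (Q τ) := by
      have := hclosed.csInf_mem hS hbd
      rw [← hQ τ] at this
      exact this
    refine le_antisymm ?_ hmem
    by_contra h
    push_neg at h
    have hopen : {y : ℝ | τ < F y} ∈ 𝓝 (Q τ) :=
      (isOpen_lt continuous_const hF_cont).mem_nhds h
    obtain ⟨ε, hε, hball⟩ := Metric.mem_nhds_iff.mp hopen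
    have hmem2 : Q τ - ε / 2 ∈ {y : ℝ | τ ≤ F y} := by
      have : Q τ - ε / 2 ∈ Metric.ball (Q τ) ε := by
        rw [Metric.mem_ball, Real.dist_eq]
        rw [show Q τ - ε / 2 - Q τ = -(ε / 2) by ring, abs_neg,
          abs_of_pos (by linarith)]
        linarith
      have h2 : τ < F (Q τ - ε / 2) := hball this
      exact h2.le
    have := csInf_le hbd hmem2
    rw [← hQ τ] at this
    linarith
  -- Q → ∞ as τ → 1⁻
  have hQtop : Tendsto Q (nhdsWithin 1 (Set.Iio 1)) atTop := by
    rw [tendsto_atTop]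
    intro M
    have hIoo : Set.Ioo (F M) 1 ∈ nhdsWithin (1 : ℝ) (Set.Iio 1) :=
      Ioo_mem_nhdsLT_of_mem ⟨hFlt M, le_refl 1⟩
    filter_upwards [hIoo] with τ hτ
    rw [hQ]
    exact le_csInf (hne τ hτ.2) (hbdd M τ hτ.1)
  -- conclude
  have heq : (fun τ : ℝ => (1 - F (Q τ)) * (Q τ) ^ v) =ᶠ[nhdsWithin 1 (Set.Iio 1)]
      (fun τ : ℝ => (1 - τ) * (Q τ) ^ v) := by
    have hIoo : Set.Ioo (F 0) 1 ∈ nhdsWithin (1 : ℝ) (Set.Iio 1) :=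
      Ioo_mem_nhdsLT_of_mem ⟨hFlt 0, le_refl 1⟩
    filter_upwards [hIoo] with τ hτ
    rw [hQF 0 τ hτ.1 hτ.2]
  exact (h_tail.comp hQtop).congr' heq
end

section
/- Let f : ℝ → ℝ be a nonnegative measurable function, let v > 0 and A ≥ 0, and suppose f(y)·y^{v+1} → A as y → ∞. Then q^{v} · ∫_{q}^{∞} f(y) dy → A/v as q → ∞. -/
open Filter Topology MeasureTheory

/-- Density-to-survival tail equivalence: if `f(y)·y^{v+1} → A` with `v > 0`, then
`q^{v} · ∫_{q}^{∞} f(y) dy → A/v` as `q → ∞`. -/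
theorem tail_survival_asymptotic
    (f : ℝ → ℝ) (hf_meas : Measurable f) (hf_nonneg : ∀ y, 0 ≤ f y)
    (v A : ℝ) (hv : 0 < v) (hA : 0 ≤ A)
    (h_tail : Tendsto (fun y : ℝ => f y * y ^ (v + 1)) atTop (𝓝 A)) :
    Tendsto (fun q : ℝ => q ^ v * ∫ y in Set.Ioi q, f y) atTop (𝓝 (A / v)) := by
  rw [Metric.tendsto_atTop]
  intro ε hε
  set δ := v * ε / 2 with hδdef
  have hδ : 0 < δ := by positivity
  obtain ⟨M₀, hM₀⟩ := (Metric.tendsto_atTop.mp h_tail) δ hδ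
  refine ⟨max M₀ 1, fun q hq => ?_⟩
  have hq1 : 0 < q := lt_of_lt_of_le one_pos (le_trans (le_max_right M₀ 1) hq)
  have hbound : ∀ y ∈ Set.Ioi q, |f y * y ^ (v + 1) - A| < δ := by
    intro y hy
    have : M₀ ≤ y := le_trans (le_max_left M₀ 1) (le_trans hq (le_of_lt hy))
    simpa [Real.dist_eq] using hM₀ y this
  have key : ∀ y ∈ Set.Ioi q,
      (A - δ) * y ^ (-(v + 1)) ≤ f y ∧ f y ≤ (A + δ) * y ^ (-(v + 1)) := by
    intro y hy
    have hy0 : 0 < y := hq1.trans hy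
    have hyp : 0 < y ^ (v + 1) := Real.rpow_pos_of_pos hy0 _
    obtain ⟨h1, h2⟩ := abs_lt.mp (hbound y hy)
    have e : y ^ (-(v + 1)) = (y ^ (v + 1))⁻¹ := Real.rpow_neg hy0.le _
    constructor
    · rw [e, ← div_eq_mul_inv, div_le_iff₀ hyp]; linarith
    · rw [e, ← div_eq_mul_inv, le_div_iff₀ hyp]; linarith
  have hlt : -(v + 1) < -1 := by linarith
  have hIg : IntegrableOn (fun y : ℝ => y ^ (-(v + 1))) (Set.Ioi q) :=
    integrableOn_Ioi_rpow_of_lt hlt hq1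
  have hint : ∫ y in Set.Ioi q, y ^ (-(v + 1)) = q ^ (-v) / v := by
    rw [integral_Ioi_rpow_of_lt hlt hq1, show -(v + 1) + 1 = -v by ring, neg_div_neg_eq]
  have hIf : IntegrableOn f (Set.Ioi q) := by
    apply Integrable.mono' (hIg.const_mul (A + δ)) hf_meas.aestronglyMeasurable.restrict
    filter_upwards [ae_restrict_mem measurableSet_Ioi] with y hy
    rw [Real.norm_eq_abs, abs_of_nonneg (hf_nonneg y)]
    exact (key y hy).2
  have hub : ∫ y in Set.Ioi q, f y ≤ (A + δ) * (q ^ (-v) / v) := by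
    calc ∫ y in Set.Ioi q, f y ≤ ∫ y in Set.Ioi q, (A + δ) * y ^ (-(v + 1)) :=
          setIntegral_mono_on hIf (hIg.const_mul _) measurableSet_Ioi
            (fun y hy => (key y hy).2)
      _ = (A + δ) * (q ^ (-v) / v) := by rw [integral_const_mul, hint]
  have hlb : (A - δ) * (q ^ (-v) / v) ≤ ∫ y in Set.Ioi q, f y := by
    calc (A - δ) * (q ^ (-v) / v) = ∫ y in Set.Ioi q, (A - δ) * y ^ (-(v + 1)) := by
          rw [integral_const_mul, hint]
      _ ≤ ∫ y in Set.Ioi q, f y :=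
          setIntegral_mono_on (hIg.const_mul _) hIf measurableSet_Ioi
            (fun y hy => (key y hy).1)
  have hqv : q ^ v * q ^ (-v) = 1 := by
    rw [← Real.rpow_add hq1]; simp
  have hqvnn : (0 : ℝ) ≤ q ^ v := Real.rpow_nonneg hq1.le v
  have hub' : q ^ v * ∫ y in Set.Ioi q, f y ≤ (A + δ) / v := by
    have := mul_le_mul_of_nonneg_left hub hqvnn
    rwa [show q ^ v * ((A + δ) * (q ^ (-v) / v)) = q ^ v * q ^ (-v) * ((A + δ) / v) by ring,
      hqv, one_mul] at this
  have hlb' : (A - δ) / v ≤ q ^ v * ∫ y in Set.Ioi q, f y := by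
    have := mul_le_mul_of_nonneg_left hlb hqvnn
    rwa [show q ^ v * ((A - δ) * (q ^ (-v) / v)) = q ^ v * q ^ (-v) * ((A - δ) / v) by ring,
      hqv, one_mul] at this
  have hδv : δ / v = ε / 2 := by
    rw [hδdef]; field_simp
  rw [Real.dist_eq, abs_lt]
  have h1 : (A - δ) / v = A / v - δ / v := by ring
  have h2 : (A + δ) / v = A / v + δ / v := by ring
  constructor <;> [skip; skip] <;> rw [hδv] at * <;> [linarith [hlb', h1]; linarith [hub', h2]]
end
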